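/- arXiv:1206.0185 — 4 statements merged into one kernel-verified Lean document; each statement's English description precedes it below -/
import Mathlib

section
/- Let G be a finite group, R a subgroup of G, and H an R-conjugate-permutable subgroup of G with R·H = H·R (as subsets of G). Then H is subnormal in H·R; moreover, if in addition H is a pronormal subgroup of H·R, then H is normal in H·R. -/
open scoped Pointwise

section Defs

variable {G : Type*} [Group G]

/-- The conjugate `H^x = x⁻¹ H x` of a subgroup `H` of `G`. -/
def conjS (x : G) (H : Subgroup G) : Subgroup G :=
  H.map (MulAut.conj x⁻¹).toMonoidHom

/-- A subgroup `H` of `G` is `R`-conjugate-permutable (for a subset `R ⊆ G`) if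
`H · H^x = H^x · H` as subsets of `G`, for all `x ∈ R`. -/
def IsRCP (R : Set G) (H : Subgroup G) : Prop :=
  ∀ x ∈ R, (H : Set G) * (conjS x H : Set G) = (conjS x H : Set G) * (H : Set G)

/-- A subgroup `H` of `G` is conjugate-permutable if `H · H^x = H^x · H` for all `x ∈ G`. -/
def IsConjPermutable (H : Subgroup G) : Prop :=
  IsRCP (Set.univ : Set G) H

/-- `N` is a minimal normal subgroup of `G`. -/
def IsMinimalNormal (N : Subgroup G) : Prop :=
  N.Normal ∧ N ≠ ⊥ ∧ ∀ K : Subgroup G, K.Normal → K ≤ N → K = ⊥ ∨ K = N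

/-- `H` is an abnormal subgroup of `G`: `x ∈ ⟨H, H^x⟩` for all `x ∈ G`. -/
def IsAbnormal (H : Subgroup G) : Prop :=
  ∀ x : G, x ∈ H ⊔ conjS x H

/-- `H` is normal in the subgroup `K` of `G`. -/
def IsNormalIn (H K : Subgroup G) : Prop :=
  H ≤ K ∧ ∀ x ∈ K, ∀ h ∈ H, x * h * x⁻¹ ∈ H

/-- `H` is subnormal in the subgroup `K`: there is a chain
`H = H₀ ◁ H₁ ◁ ⋯ ◁ Hₙ = K` with each term normal in the next. -/
def IsSubnormalIn (H K : Subgroup G) : Prop :=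
  ∃ (n : ℕ) (s : Fin (n + 1) → Subgroup G),
    s 0 = H ∧ s (Fin.last n) = K ∧
    ∀ i : Fin n, s i.castSucc ≤ s i.succ ∧
      ∀ x ∈ s i.succ, ∀ h ∈ s i.castSucc, x * h * x⁻¹ ∈ s i.castSucc

/-- `H` is pronormal in the subgroup `K`: for every `x ∈ K`, the subgroups `H` and `H^x`
are conjugate in `⟨H, H^x⟩`. -/
def IsPronormalIn (H K : Subgroup G) : Prop :=
  H ≤ K ∧ ∀ x ∈ K, ∃ k ∈ H ⊔ conjS x H, conjS k H = conjS x H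

end Defs

/-- The socle of `G`: the subgroup generated by all minimal normal subgroups of `G`. -/
def socle' (G : Type*) [Group G] : Subgroup G :=
  sSup {N : Subgroup G | IsMinimalNormal N}

/-- `F̃(G)`: the subgroup of `G` containing the Frattini subgroup `Φ(G)` with
`F̃(G)/Φ(G) = Soc(G/Φ(G))`. -/
def Ftilde (G : Type*) [Group G] : Subgroup G :=
  (socle' (G ⧸ frattini G)).comap (QuotientGroup.mk' (frattini G))

/-- The Fitting subgroup `F(G)`: the largest normal nilpotent subgroup of `G`
(the subgroup generated by all normal nilpotent subgroups). -/
def Fitting (G : Type*) [Group G] : Subgroup G :=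
  sSup {N : Subgroup G | N.Normal ∧ Group.IsNilpotent N}

section FittingNormal

variable {G : Type*} [Group G]

lemma map_conj_eq_self {N : Subgroup G} (hN : N.Normal) (g : G) :
    N.map (MulAut.conj g).toMonoidHom = N := by
  ext x
  simp only [Subgroup.mem_map, MulEquiv.coe_toMonoidHom, MulAut.conj_apply]
  constructor
  · rintro ⟨n, hn, rfl⟩; exact hN.conj_mem n hn g
  · intro hx
    refine ⟨g⁻¹ * x * g, by simpa using hN.conj_mem x hx g⁻¹, by group⟩

instance Fitting_normal (G : Type*) [Group G] : (Fitting G).Normal := by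
  constructor
  intro n hn g
  have h1 : (Fitting G).map (MulAut.conj g).toMonoidHom = Fitting G := by
    unfold Fitting
    rw [sSup_eq_iSup, Subgroup.map_iSup]
    refine iSup_congr fun N => ?_
    rw [Subgroup.map_iSup]
    exact iSup_congr_Prop Iff.rfl fun hN => map_conj_eq_self hN.1 g
  rw [← h1]
  exact Subgroup.mem_map.2 ⟨n, hn, rfl⟩

end FittingNormal

/-- The generalized Fitting subgroup `F*(G)`: the subgroup containing `F(G)` with
`F*(G)/F(G) = Soc(C_G(F(G))·F(G)/F(G))`. -/
def FStar (G : Type*) [Group G] : Subgroup G :=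
  Subgroup.comap (QuotientGroup.mk' (Fitting G))
    (Subgroup.map
      ((Subgroup.centralizer (Fitting G : Set G) ⊔ Fitting G).map
          (QuotientGroup.mk' (Fitting G))).subtype
      (socle' ((Subgroup.centralizer (Fitting G : Set G) ⊔ Fitting G).map
          (QuotientGroup.mk' (Fitting G)))))

/-- A group is supersoluble if it has a normal series all of whose terms are
normal in the whole group and all of whose factors are cyclic; the factor
`s (i+1) / s i` being cyclic is expressed by `s (i+1) ≤ s i ⊔ ⟨g⟩` for some `g`. -/
def IsSupersoluble (G : Type*) [Group G] : Prop :=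
  ∃ (n : ℕ) (s : Fin (n + 1) → Subgroup G),
    Monotone s ∧ s 0 = ⊥ ∧ s (Fin.last n) = ⊤ ∧ (∀ i, (s i).Normal) ∧
    ∀ i : Fin n, ∃ g : G, s i.succ ≤ s i.castSucc ⊔ Subgroup.zpowers g

/-- A group is metanilpotent if it has a normal nilpotent subgroup with
nilpotent quotient. -/
def IsMetanilpotent (G : Type*) [Group G] : Prop :=
  ∃ (N : Subgroup G) (hN : N.Normal),
    Group.IsNilpotent N ∧
      @Group.IsNilpotent (G ⧸ N) (@QuotientGroup.Quotient.group G _ N hN)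


/-!
Since `R H = H R`, every element of `S = H ⊔ R` is a product `h r`, and `H^(h r) = H^r`; so `H`
permutes with all its conjugates by elements of `S`. Then any two joins of such conjugates permute
(Foguel). If `H ≠ S`, take a maximal join `X ≠ S` of conjugates containing `H`: for `k ∈ S` the join
`X X^k` is again proper, since `k ∈ X X^k` forces `k ∈ X`, so maximality gives `X^k ≤ X`. Hence the
normal closure of `H` in `S` lies in `X` and is proper, and iterating normal closures yields a
subnormal series from `H` to `S`. Finally, if `H ◁ L ◁ K` and `H` is pronormal in `K`, then for
`x ∈ K` the conjugating element lies in `⟨H, H^x⟩ ≤ L`, which normalizes `H`; so `H^x = H`.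
-/

section Conjugates

variable {G : Type*} [Group G] {H K : Subgroup G} {x y : G}

lemma mem_conjS : y ∈ conjS x H ↔ x * y * x⁻¹ ∈ H := by
  rw [conjS, Subgroup.mem_map_equiv]
  simp

lemma coe_conjS (x : G) (H : Subgroup G) :
    (conjS x H : Set G) = MulAut.conj x⁻¹ '' H :=
  Subgroup.coe_map _ _

@[simp]
lemma conjS_one (H : Subgroup G) : conjS 1 H = H := by
  ext; simp [mem_conjS]

lemma conjS_conjS (x y : G) (H : Subgroup G) : conjS x (conjS y H) = conjS (y * x) H := by
  ext; simp [mem_conjS, mul_assoc]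

lemma conjS_mono (x : G) (h : H ≤ K) : conjS x H ≤ conjS x K :=
  Subgroup.map_mono h

lemma conjS_sup (x : G) (H K : Subgroup G) : conjS x (H ⊔ K) = conjS x H ⊔ conjS x K :=
  Subgroup.map_sup _ _ _

lemma conjS_iSup {ι : Sort*} (x : G) (f : ι → Subgroup G) :
    conjS x (⨆ i, f i) = ⨆ i, conjS x (f i) :=
  Subgroup.map_iSup _ _

lemma conjS_le_of_mem (hHK : H ≤ K) (hx : x ∈ K) : conjS x H ≤ K := fun y hy => by
  simpa [mul_assoc] using K.mul_mem (K.mul_mem (inv_mem hx) (hHK (mem_conjS.1 hy))) hx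

lemma conjS_eq_self_of_mem (hx : x ∈ H) : conjS x H = H :=
  le_antisymm (conjS_le_of_mem le_rfl hx) fun _ hy =>
    mem_conjS.2 (H.mul_mem (H.mul_mem hx hy) (inv_mem hx))

lemma conjS_mul_comm_conjS (h : (H : Set G) * K = K * H) (x : G) :
    (conjS x H : Set G) * conjS x K = conjS x K * conjS x H := by
  simp only [coe_conjS, ← Set.image_mul, h]

end Conjugates

section Normality

variable {G : Type*} [Group G] {H K L : Subgroup G} {k : G}

lemma isNormalIn_of_conjS_le (hHK : H ≤ K) (h : ∀ k ∈ K, conjS k H ≤ H) : IsNormalIn H K :=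
  ⟨hHK, fun x hx y hy => h x⁻¹ (inv_mem hx) (mem_conjS.2 (by simpa [mul_assoc] using hy))⟩

lemma IsNormalIn.conjS_eq (h : IsNormalIn H K) (hk : k ∈ K) : conjS k H = H := by
  have hle : ∀ k ∈ K, conjS k H ≤ H := fun k hk y hy => by
    simpa [mul_assoc] using h.2 k⁻¹ (inv_mem hk) _ (mem_conjS.1 hy)
  refine le_antisymm (hle k hk) ?_
  calc H = conjS k (conjS k⁻¹ H) := by rw [conjS_conjS, inv_mul_cancel, conjS_one]
    _ ≤ conjS k H := conjS_mono k (hle _ (inv_mem hk))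

lemma IsPronormalIn.mono (h : IsPronormalIn H K) (hHL : H ≤ L) (hLK : L ≤ K) :
    IsPronormalIn H L :=
  ⟨hHL, fun x hx => h.2 x (hLK hx)⟩

end Normality

section PermutingSubgroups

variable {G : Type*} [Group G] {A B C : Subgroup G}

lemma coe_sup_of_mul_comm (h : (A : Set G) * B = B * A) :
    ((A ⊔ B : Subgroup G) : Set G) = A * B := by
  rw [Subgroup.sup_eq_closure_mul]
  refine Set.Subset.antisymm (fun x hx => ?_) Subgroup.subset_closure
  induction hx using Subgroup.closure_induction'' with
  | one => exact ⟨1, A.one_mem, 1, B.one_mem, mul_one 1⟩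
  | mem _ hx => exact hx
  | inv_mem x hx =>
    rw [← Set.inv_mem_inv, mul_inv_rev, inv_coe_set, inv_coe_set, ← h] at hx
    simpa using hx
  | mul x y _ _ hx hy =>
    have := Set.mul_mem_mul hx hy
    rwa [mul_assoc, ← mul_assoc (B : Set G), ← h, mul_assoc, ← mul_assoc,
      coe_mul_coe, coe_mul_coe] at this

lemma mul_sup_subset (hB : (A : Set G) * B = B * A) (hC : (A : Set G) * C = C * A) :
    (A : Set G) * ↑(B ⊔ C) ⊆ ↑(B ⊔ C) * A := by
  have hgen : ∀ M : Subgroup G, (A : Set G) * M = M * A → M ≤ B ⊔ C →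
      ∀ a ∈ A, ∀ x ∈ M, a * x ∈ (↑(B ⊔ C) : Set G) * A := fun M hM hML a ha x hx =>
    Set.mul_subset_mul_right hML (hM ▸ Set.mul_mem_mul ha hx)
  rintro _ ⟨a, ha, g, hg, rfl⟩
  rw [SetLike.mem_coe, Subgroup.sup_eq_closure] at hg
  induction hg using Subgroup.closure_induction'' generalizing a with
  | mem x hx => exact hx.elim (hgen B hB le_sup_left a ha x) (hgen C hC le_sup_right a ha x)
  | inv_mem x hx =>
    exact hx.elim (fun hx => hgen B hB le_sup_left a ha _ (inv_mem hx))
      (fun hx => hgen C hC le_sup_right a ha _ (inv_mem hx))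
  | one => exact ⟨1, one_mem _, a, ha, by simp⟩
  | mul x y _ _ ihx ihy =>
    obtain ⟨l, hl, a', ha', hx⟩ := ihx a ha
    obtain ⟨l', hl', a'', ha'', hy⟩ := ihy a' ha'
    refine ⟨l * l', mul_mem hl hl', a'', ha'', ?_⟩
    beta_reduce at hx hy ⊢
    rw [mul_assoc, hy, ← mul_assoc, hx, mul_assoc]

lemma mul_sup_comm (hB : (A : Set G) * B = B * A) (hC : (A : Set G) * C = C * A) :
    (A : Set G) * ↑(B ⊔ C) = ↑(B ⊔ C) * A := by
  refine (mul_sup_subset hB hC).antisymm ?_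
  simpa only [mul_inv_rev, inv_coe_set] using Set.inv_subset_inv.2 (mul_sup_subset hB hC)

end PermutingSubgroups

section ConjugatePermutable

variable {G : Type*} [Group G] {H S X Y : Subgroup G} {k : G}

lemma IsRCP.conjS_mul_comm (hCP : IsRCP (S : Set G) H) {a b : G} (ha : a ∈ S) (hb : b ∈ S) :
    (conjS a H : Set G) * conjS b H = conjS b H * conjS a H := by
  have := conjS_mul_comm_conjS (hCP (b * a⁻¹) (mul_mem hb (inv_mem ha))) a
  rwa [conjS_conjS, inv_mul_cancel_right] at this

lemma IsRCP.sup {R : Subgroup G} (hCP : IsRCP (R : Set G) H) (hRH : (R : Set G) * H = H * R) :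
    IsRCP ((H ⊔ R : Subgroup G) : Set G) H := by
  intro x hx
  rw [coe_sup_of_mul_comm hRH.symm] at hx
  obtain ⟨a, ha, r, hr, rfl⟩ := hx
  rw [← conjS_conjS, conjS_eq_self_of_mem ha]
  exact hCP r hr

inductive IsConjJoin (H S : Subgroup G) : Subgroup G → Prop
  | conj {t : G} : t ∈ S → IsConjJoin H S (conjS t H)
  | sup {X Y : Subgroup G} : IsConjJoin H S X → IsConjJoin H S Y → IsConjJoin H S (X ⊔ Y)

namespace IsConjJoin

lemma self (H S : Subgroup G) : IsConjJoin H S H := by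
  simpa using conj (H := H) S.one_mem

lemma le (hHS : H ≤ S) (hX : IsConjJoin H S X) : X ≤ S := by
  induction hX with
  | conj ht => exact conjS_le_of_mem hHS ht
  | sup _ _ ihX ihY => exact sup_le ihX ihY

lemma conjS (hk : k ∈ S) (hX : IsConjJoin H S X) : IsConjJoin H S (conjS k X) := by
  induction hX with
  | conj ht => rw [conjS_conjS]; exact conj (mul_mem ht hk)
  | sup _ _ ihX ihY => rw [conjS_sup]; exact sup ihX ihY

lemma mul_comm (hCP : IsRCP (S : Set G) H) (hX : IsConjJoin H S X) (hY : IsConjJoin H S Y) :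
    (X : Set G) * Y = Y * X := by
  induction hX generalizing Y with
  | conj ht =>
    induction hY with
    | conj hu => exact hCP.conjS_mul_comm ht hu
    | sup _ _ ihY ihY' => exact mul_sup_comm ihY ihY'
  | sup _ _ ihX ihX' => exact (mul_sup_comm (ihX hY).symm (ihX' hY).symm).symm

end IsConjJoin

lemma mem_of_mem_sup_conjS (h : (X : Set G) * conjS k X = conjS k X * X)
    (hk : k ∈ X ⊔ conjS k X) : k ∈ X := by
  rw [← SetLike.mem_coe, coe_sup_of_mul_comm h] at hk
  obtain ⟨a, ha, c, hc, rfl⟩ := hk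
  simpa [mul_assoc] using X.mul_mem (mem_conjS.1 hc) ha

lemma conjS_le_of_maximal (hCP : IsRCP (S : Set G) H)
    (hX : Maximal (fun X => IsConjJoin H S X ∧ X ≠ S) X) (hk : k ∈ S) : conjS k X ≤ X := by
  obtain ⟨⟨hX, hXS⟩, hmax⟩ := hX
  have hXk := hX.conjS hk
  have hYS : X ⊔ conjS k X ≠ S := by
    intro hYS
    have hkX := mem_of_mem_sup_conjS (hX.mul_comm hCP hXk) (hYS ▸ hk)
    rw [conjS_eq_self_of_mem hkX, sup_idem] at hYS
    exact hXS hYS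
  exact le_sup_right.trans (hmax ⟨hX.sup hXk, hYS⟩ le_sup_left)

end ConjugatePermutable

section NormalClosureIn

variable {G : Type*} [Group G] {H S X : Subgroup G}

def normalClosureIn (H S : Subgroup G) : Subgroup G :=
  ⨆ t ∈ S, conjS t H

lemma le_normalClosureIn : H ≤ normalClosureIn H S :=
  (conjS_one H).ge.trans (le_iSup₂ (f := fun t (_ : t ∈ S) => conjS t H) 1 S.one_mem)

lemma normalClosureIn_le_of_conjS_le (hHX : H ≤ X) (hX : ∀ k ∈ S, conjS k X ≤ X) :
    normalClosureIn H S ≤ X :=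
  iSup₂_le fun t ht => (conjS_mono t hHX).trans (hX t ht)

lemma normalClosureIn_le (hHS : H ≤ S) : normalClosureIn H S ≤ S :=
  normalClosureIn_le_of_conjS_le hHS fun _ hk => conjS_le_of_mem le_rfl hk

lemma isNormalIn_normalClosureIn (hHS : H ≤ S) : IsNormalIn (normalClosureIn H S) S := by
  refine isNormalIn_of_conjS_le (normalClosureIn_le hHS) fun k hk => ?_
  simp only [normalClosureIn, conjS_iSup, conjS_conjS]
  exact iSup₂_le fun t ht => le_iSup₂ (f := fun t (_ : t ∈ S) => conjS t H) (t * k) (mul_mem ht hk)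

end NormalClosureIn

section Subnormality

variable {G : Type*} [Group G] {H K S : Subgroup G}

/-- An inductive form of `IsSubnormalIn`, convenient for induction on the series. -/
inductive SubnormalIn (H : Subgroup G) : Subgroup G → Prop
  | refl : SubnormalIn H H
  | step {L K : Subgroup G} : SubnormalIn H L → IsNormalIn L K → SubnormalIn H K

namespace SubnormalIn

lemma le (h : SubnormalIn H K) : H ≤ K := by
  induction h with
  | refl => exact le_rfl
  | step _ hLK ih => exact ih.trans hLK.1

lemma isSubnormalIn (h : SubnormalIn H K) : IsSubnormalIn H K := by
  induction h with
  | refl => exact ⟨0, fun _ => H, rfl, rfl, fun i => i.elim0⟩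
  | @step L K _ hLK ih =>
    obtain ⟨n, s, h0, hlast, hs⟩ := ih
    refine ⟨n + 1, Fin.snoc s K, by simpa using h0, by simp, fun i => ?_⟩
    induction i using Fin.lastCases with
    | last => simpa [← hlast, IsNormalIn] using hLK
    | cast j =>
      rw [Fin.succ_castSucc]
      simpa only [Fin.snoc_castSucc] using hs j

lemma isNormalIn_of_isPronormalIn (h : SubnormalIn H K) (hpro : IsPronormalIn H K) :
    IsNormalIn H K := by
  induction h with
  | refl => exact isNormalIn_of_conjS_le le_rfl fun _ hk => (conjS_eq_self_of_mem hk).le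
  | @step L K hHL hLK ih =>
    have hHL : IsNormalIn H L := ih (hpro.mono hHL.le hLK.1)
    refine isNormalIn_of_conjS_le (hHL.1.trans hLK.1) fun x hx => ?_
    obtain ⟨k, hk, hkx⟩ := hpro.2 x hx
    have hkL : k ∈ L :=
      sup_le hHL.1 ((conjS_mono x hHL.1).trans (hLK.conjS_eq hx).le) hk
    rw [← hkx, hHL.conjS_eq hkL]

end SubnormalIn

lemma IsRCP.normalClosureIn_ne [Finite G] (hHS : H ≤ S) (hCP : IsRCP (S : Set G) H)
    (hne : H ≠ S) : normalClosureIn H S ≠ S := by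
  obtain ⟨X, hHX, hX⟩ := (Set.toFinite {X | IsConjJoin H S X ∧ X ≠ S}).exists_le_maximal
    ⟨IsConjJoin.self H S, hne⟩
  have hXS : X < S := lt_of_le_of_ne (hX.prop.1.le hHS) hX.prop.2
  exact ((normalClosureIn_le_of_conjS_le hHX fun k hk =>
    conjS_le_of_maximal hCP hX hk).trans_lt hXS).ne

lemma IsRCP.subnormalIn [Finite G] (hHS : H ≤ S) (hCP : IsRCP (S : Set G) H) :
    SubnormalIn H S := by
  induction S using WellFoundedLT.induction with
  | _ S ih =>
  obtain rfl | hne := eq_or_ne H S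
  · exact .refl
  have hNS : normalClosureIn H S < S :=
    lt_of_le_of_ne (normalClosureIn_le hHS) (hCP.normalClosureIn_ne hHS hne)
  exact .step (ih _ hNS le_normalClosureIn fun x hx => hCP x (hNS.le hx))
    (isNormalIn_normalClosureIn hHS)

end Subnormality

theorem subnormal_and_normal_of_pronormal_of_rcp
    {G : Type*} [Group G] [Finite G] (R H : Subgroup G)
    (h1 : IsRCP (R : Set G) H)
    (h2 : (R : Set G) * (H : Set G) = (H : Set G) * (R : Set G)) :
    IsSubnormalIn H (H ⊔ R) ∧
      (IsPronormalIn H (H ⊔ R) → IsNormalIn H (H ⊔ R)) := by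
  have hsn := (h1.sup h2).subnormalIn le_sup_left
  exact ⟨hsn.isSubnormalIn, hsn.isNormalIn_of_isPronormalIn⟩
end

section
/- Let G be a finite group, R a subgroup of G, and P a Sylow p-subgroup of G that is R-conjugate-permutable and satisfies P·R = R·P (as subsets of G). Then P is a normal subgroup of the subgroup P·R. -/
open scoped Pointwise

section PermutingSubgroups

variable {G : Type*} [Group G]

theorem Subgroup.coe_sup_eq_mul_of_mul_comm {H K : Subgroup G}
    (hHK : (H : Set G) * K = K * H) : ((H ⊔ K : Subgroup G) : Set G) = H * K := by
  have mul_closed : ((H : Set G) * K) * (H * K) = H * K := by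
    calc ((H : Set G) * K) * (H * K) = H * (K * H) * K := by simp only [mul_assoc]
      _ = (H * H) * (K * K) := by rw [← hHK]; simp only [mul_assoc]
      _ = H * K := by rw [coe_mul_coe, coe_mul_coe]
  have inv_closed : ((H : Set G) * K)⁻¹ = H * K := by
    rw [mul_inv_rev, inv_coe_set, inv_coe_set, hHK]
  let HK : Subgroup G :=
    { carrier := H * K
      one_mem' := ⟨1, H.one_mem, 1, K.one_mem, one_mul 1⟩
      mul_mem' := fun ha hb => mul_closed ▸ Set.mul_mem_mul ha hb
      inv_mem' := fun ha => inv_closed ▸ Set.inv_mem_inv.mpr ha }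
  have sup_le_HK : H ⊔ K ≤ HK :=
    sup_le (fun h hh => ⟨h, hh, 1, K.one_mem, mul_one h⟩)
      (fun k hk => ⟨1, H.one_mem, k, hk, one_mul k⟩)
  refine subset_antisymm sup_le_HK ?_
  rintro _ ⟨h, hh, k, hk, rfl⟩
  exact mul_mem (Subgroup.mem_sup_left hh) (Subgroup.mem_sup_right hk)

end PermutingSubgroups

namespace Sylow

open Subgroup

variable {G : Type*} [Group G] {p : ℕ}

theorem exists_mem_smul_eq_of_le [Fact p.Prime] [Finite (Sylow p G)] {P Q : Sylow p G}
    {H : Subgroup G} (hP : (P : Subgroup G) ≤ H) (hQ : (Q : Subgroup G) ≤ H) :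
    ∃ h ∈ H, h • P = Q := by
  obtain ⟨h, hh⟩ := MulAction.exists_smul_eq H (P.subtype hP) (Q.subtype hQ)
  rw [smul_subtype] at hh
  exact ⟨h, h.2, subtype_injective hh⟩

theorem eq_of_smul_eq_of_mem_mul {P Q : Sylow p G} {g : G} (hg : g ∈ (Q : Set G) * P)
    (hgP : g • P = Q) : Q = P := by
  obtain ⟨c, hc, b, hb, rfl⟩ := hg
  rw [mul_smul, smul_eq_iff_mem_normalizer.mpr (le_normalizer hb)] at hgP
  calc Q = c⁻¹ • Q := (smul_eq_iff_mem_normalizer.mpr (le_normalizer (inv_mem hc))).symm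
    _ = P := by rw [← hgP, inv_smul_smul]

/-- `P` and `g • P` are conjugate in `P ⊔ g • P`, whose underlying set is `(g • P) * P`. -/
theorem smul_eq_self_of_mul_comm [Fact p.Prime] [Finite (Sylow p G)] (P : Sylow p G) (g : G)
    (hP : ((P : Subgroup G) : Set G) * ((g • P : Sylow p G) : Subgroup G) =
      ((g • P : Sylow p G) : Subgroup G) * (P : Subgroup G)) : g • P = P := by
  obtain ⟨q, hq, hqP⟩ :=
    exists_mem_smul_eq_of_le (H := (P : Subgroup G) ⊔ ((g • P : Sylow p G) : Subgroup G))
      le_sup_left le_sup_right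
  have hq' : q ∈ (((g • P : Sylow p G) : Subgroup G) : Set G) * (P : Subgroup G) := by
    rw [← hP, ← coe_sup_eq_mul_of_mul_comm hP]
    exact hq
  rw [← hqP, eq_of_smul_eq_of_mem_mul (hqP ▸ hq') rfl]

theorem subset_normalizer_of_isRCP [Fact p.Prime] [Finite (Sylow p G)] (P : Sylow p G)
    {R : Set G} (hR : IsRCP R (P : Subgroup G)) : R ⊆ normalizer (P : Set G) := by
  intro r hr
  rw [SetLike.mem_coe, ← inv_mem_iff, ← smul_eq_iff_mem_normalizer]
  exact smul_eq_self_of_mul_comm P r⁻¹ (hR r hr)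

end Sylow

theorem sylow_normal_in_product_of_rcp_general
    {G : Type*} [Group G] [Finite G] (R : Subgroup G) (p : ℕ) (hp : p.Prime)
    (P : Sylow p G)
    (h1 : IsRCP (R : Set G) (P : Subgroup G)) :
    IsNormalIn (P : Subgroup G) ((P : Subgroup G) ⊔ R) := by
  have : Fact p.Prime := ⟨hp⟩
  have hle : (P : Subgroup G) ⊔ R ≤ Subgroup.normalizer (P : Subgroup G) :=
    sup_le Subgroup.le_normalizer (Sylow.subset_normalizer_of_isRCP P h1)
  exact ⟨le_sup_left, fun x hx h hh => (Subgroup.mem_normalizer_iff.mp (hle hx) h).mp hh⟩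

theorem sylow_normal_in_product_of_rcp
    {G : Type*} [Group G] [Finite G] (R : Subgroup G) (p : ℕ) (hp : p.Prime)
    (P : Sylow p G)
    (h1 : IsRCP (R : Set G) (P : Subgroup G))
    (h2 : ((P : Subgroup G) : Set G) * (R : Set G) =
      (R : Set G) * ((P : Subgroup G) : Set G)) :
    IsNormalIn (P : Subgroup G) ((P : Subgroup G) ⊔ R) :=
  sylow_normal_in_product_of_rcp_general R p hp P h1
end

section
/- Let G be a finite group, R a subgroup of G, and M an R-conjugate-permutable subgroup of G such that M·R = R·M (as subsets of G) and M is a maximal subgroup of M·R. Then M is a normal subgroup of M·R. -/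
open scoped Pointwise

section Aux

variable {G : Type*} [Group G]

/-- If `H` and `K` permute, then `H * K` is the carrier of `H ⊔ K`. -/
def permProd (H K : Subgroup G) (h : (H : Set G) * K = (K : Set G) * H) : Subgroup G where
  carrier := (H : Set G) * K
  one_mem' := ⟨1, H.one_mem, 1, K.one_mem, mul_one 1⟩
  mul_mem' := by
    rintro a b ⟨h1, hh1, k1, hk1, rfl⟩ ⟨h2, hh2, k2, hk2, rfl⟩
    have : k1 * h2 ∈ (K : Set G) * H := ⟨k1, hk1, h2, hh2, rfl⟩
    rw [← h] at this
    obtain ⟨h', hh', k', hk', heq⟩ := this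
    exact ⟨h1 * h', H.mul_mem hh1 hh', k' * k2, K.mul_mem hk' hk2, by
      rw [show h1 * k1 * (h2 * k2) = h1 * (k1 * h2) * k2 by group, ← heq]; group⟩
  inv_mem' := by
    rintro a ⟨h1, hh1, k1, hk1, rfl⟩
    have : k1⁻¹ * h1⁻¹ ∈ (K : Set G) * H := ⟨k1⁻¹, K.inv_mem hk1, h1⁻¹, H.inv_mem hh1, rfl⟩
    rw [← h] at this
    simpa [mul_inv_rev] using this

lemma permProd_coe (H K : Subgroup G) (h : (H : Set G) * K = (K : Set G) * H) :
    (permProd H K h : Set G) = (H : Set G) * K := rfl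

lemma permProd_eq_sup (H K : Subgroup G) (h : (H : Set G) * K = (K : Set G) * H) :
    permProd H K h = H ⊔ K := by
  apply le_antisymm
  · rintro x ⟨h1, hh1, k1, hk1, rfl⟩
    exact mul_mem (Subgroup.mem_sup_left hh1) (Subgroup.mem_sup_right hk1)
  · refine sup_le ?_ ?_
    · intro x hx; exact ⟨x, hx, 1, K.one_mem, mul_one x⟩
    · intro x hx; exact ⟨1, H.one_mem, x, hx, one_mul x⟩

lemma conjS_mem {H : Subgroup G} {x : G} {a : G} :
    a ∈ conjS x H ↔ x * a * x⁻¹ ∈ H := by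
  simp only [conjS, Subgroup.mem_map, MulEquiv.coe_toMonoidHom, MulAut.conj_apply, inv_inv]
  constructor
  · rintro ⟨b, hb, rfl⟩; simpa [mul_assoc] using hb
  · intro h; exact ⟨x * a * x⁻¹, h, by group⟩

lemma conjS_eq_of_mem {H : Subgroup G} {x : G} (hx : x ∈ H) : conjS x H = H := by
  ext a
  rw [conjS_mem]
  refine ⟨fun h => ?_, fun h => H.mul_mem (H.mul_mem hx h) (H.inv_mem hx)⟩
  have e : a = x⁻¹ * (x * a * x⁻¹) * x := by group
  rw [e]
  exact H.mul_mem (H.mul_mem (H.inv_mem hx) h) hx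

lemma conjS_card (x : G) (H : Subgroup G) : Nat.card (conjS x H) = Nat.card H := by
  exact (Nat.card_congr
    (H.equivMapOfInjective _ (MulEquiv.injective (MulAut.conj x⁻¹))).toEquiv).symm

lemma conjS_mul {H : Subgroup G} (x y : G) : conjS (x * y) H = conjS y (conjS x H) := by
  ext a
  simp only [conjS_mem]
  rw [show x * (y * a * y⁻¹) * x⁻¹ = x * y * a * (x * y)⁻¹ from by group]

end Aux

theorem maximal_normal_in_product_of_rcp
    {G : Type*} [Group G] [Finite G] (R M : Subgroup G)
    (h1 : IsRCP (R : Set G) M)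
    (h2 : (M : Set G) * (R : Set G) = (R : Set G) * (M : Set G))
    (hne : M ≠ M ⊔ R)
    (hmax : ∀ K : Subgroup G, M < K → K ≤ M ⊔ R → K = M ⊔ R) :
    IsNormalIn M (M ⊔ R) := by
  -- Key step: every conjugate of M by an element of R equals M.
  have key : ∀ r ∈ R, conjS r M = M := by
    intro r hr
    by_cases hle : conjS r M ≤ M
    · exact Subgroup.eq_of_le_of_card_ge hle (conjS_card r M).ge
    · -- M · Mʳ is a subgroup properly containing M, inside M ⊔ R
      have hperm := h1 r hr
      set H := permProd M (conjS r M) hperm with hH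
      have hMH : M ≤ H := fun x hx => ⟨x, hx, 1, Subgroup.one_mem _, mul_one x⟩
      have hlt : M < H := by
        rcases SetLike.not_le_iff_exists.mp hle with ⟨a, ha, haM⟩
        exact lt_of_le_of_ne hMH fun h => haM (h ▸ ⟨1, M.one_mem, a, ha, one_mul a⟩)
      have hconj_le : conjS r M ≤ M ⊔ R := by
        intro a ha
        have hb : r * a * r⁻¹ ∈ M := conjS_mem.mp ha
        have : a = r⁻¹ * (r * a * r⁻¹) * r := by group
        rw [this]
        exact Subgroup.mul_mem _ (Subgroup.mul_mem _
          (Subgroup.inv_mem _ (Subgroup.mem_sup_right hr))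
          (Subgroup.mem_sup_left hb)) (Subgroup.mem_sup_right hr)
      have hHle : H ≤ M ⊔ R := by
        rw [hH, permProd_eq_sup]
        exact sup_le le_sup_left hconj_le
      have hHeq : H = M ⊔ R := hmax H hlt hHle
      have hrH : r ∈ H := hHeq ▸ Subgroup.mem_sup_right hr
      obtain ⟨m, hm, a, ha, heq⟩ : r ∈ (M : Set G) * (conjS r M : Set G) := hrH
      have hb : r * a * r⁻¹ ∈ M := conjS_mem.mp ha
      have hrM : r ∈ M := by
        have : r = (r * a * r⁻¹) * m := by
          have : a = m⁻¹ * r := by rw [← heq]; group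
          rw [this]; group
        rw [this]
        exact M.mul_mem hb hm
      exact conjS_eq_of_mem hrM
  constructor
  · exact le_sup_left
  · intro x hx h hh
    have hxMR : x ∈ (M : Set G) * (R : Set G) := by
      have : ((M ⊔ R : Subgroup G) : Set G) = (M : Set G) * R := by
        rw [← permProd_eq_sup M R h2]; rfl
      exact this ▸ hx
    obtain ⟨m, hm, s, hs, rfl⟩ := hxMR
    have : conjS (m * s) M = M := by
      rw [conjS_mul, conjS_eq_of_mem hm, key s hs]
    have hh' : h ∈ conjS (m * s) M := this.symm ▸ hh
    exact conjS_mem.mp hh'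
end

section
/- Let G be a finite group, H a conjugate-permutable subgroup of G, and K a normal subgroup of G. Then the product H·K is a conjugate-permutable subgroup of G. -/
open scoped Pointwise

theorem conjugate_permutable_mul_normal
    {G : Type*} [Group G] [Finite G] (H K : Subgroup G)
    (h1 : IsConjPermutable H) (h2 : K.Normal) :
    IsConjPermutable (H ⊔ K) := by
  intro x _
  haveI := h2
  have hc : conjS x (H ⊔ K) = conjS x H ⊔ K := by
    unfold conjS
    rw [Subgroup.map_sup, map_conj_eq_self h2 x⁻¹]
  have hK : (K : Set G) * (K : Set G) = (K : Set G) := coe_mul_coe K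
  have hcomm : ∀ s : Set G, s * (K : Set G) = (K : Set G) * s :=
    fun s => Subgroup.set_mul_normal_comm s K
  have h1x := h1 x (Set.mem_univ x)
  rw [hc, Subgroup.mul_normal H K, Subgroup.mul_normal (conjS x H) K]
  calc ((H : Set G) * K) * ((conjS x H : Set G) * K)
      = (H : Set G) * ((K : Set G) * (conjS x H : Set G)) * K := by
        simp only [mul_assoc]
    _ = (H : Set G) * (conjS x H : Set G) * ((K : Set G) * K) := by
        rw [← hcomm]; simp only [mul_assoc]
    _ = (conjS x H : Set G) * (H : Set G) * K := by rw [hK, h1x]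
    _ = ((conjS x H : Set G) * K) * ((H : Set G) * K) := by
        conv_rhs => rw [mul_assoc, ← mul_assoc (K : Set G), ← hcomm (H : Set G),
          mul_assoc, hK, ← mul_assoc]
end
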